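/- Let U ≥ 1, D > 1, and let ℓ be continuously differentiable on an open neighborhood of Ω̃. Suppose that for every ω on the boundary of Ω̃ and every outward normal direction n at ω (a unit vector in the cone generated by the gradients of the active constraints among ξ_i − U ≤ 0, −ξ_i − U ≤ 0, (Ξ_ii − ξ_i²) − D ≤ 0, D⁻¹ − (Ξ_ii − ξ_i²) ≤ 0), one has ⟨−(∇²A*(ω))⁻¹ ∇ℓ(ω), n⟩ < 0. Then for every ω ∈ Ω̃ there exists ρ₀ > 0 such that for all ρ ≥ ρ₀: ℰ_ρ(ω) ≥ ‖∇ℓ(ω)‖² / (2·C_L), where C_L = (9/2)·U²·D². -/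

import Mathlib

open MeasureTheory
open scoped RealInnerProductSpace

noncomputable section

/-- The space of mean-field expectation parameters `ω = (ξ, Ξ) ∈ ℝ^d × ℝ^d`,
realized as a Euclidean space indexed by `Fin d ⊕ Fin d`. -/
abbrev MFParam (d : ℕ) := EuclideanSpace ℝ (Fin d ⊕ Fin d)

def xiP {d : ℕ} (ω : MFParam d) (i : Fin d) : ℝ := ω (Sum.inl i)

def XiP {d : ℕ} (ω : MFParam d) (i : Fin d) : ℝ := ω (Sum.inr i)

def varP {d : ℕ} (ω : MFParam d) (i : Fin d) : ℝ := XiP ω i - (xiP ω i) ^ 2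

/-- The mirror map `A*(ξ, Ξ) = -(1/2) ∑ i, log (Ξ_ii - ξ_i²)`. -/
def Astar {d : ℕ} (ω : MFParam d) : ℝ := -(1 / 2) * ∑ i, Real.log (varP ω i)

/-- The Bregman divergence `D_{A*}(u, v)`. -/
def bregAstar {d : ℕ} (u v : MFParam d) : ℝ :=
  Astar u - Astar v - ⟪gradient Astar v, u - v⟫

/-- The bounded parameter domain `Ω̃`. -/
def OmegaT (d : ℕ) (U D : ℝ) : Set (MFParam d) :=
  {ω | ∀ i, |xiP ω i| ≤ U ∧ D⁻¹ ≤ varP ω i ∧ varP ω i ≤ D}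

/-- The Bregman forward–backward envelope
`ℰ_ρ(ω) = −2ρ · min_{ω' ∈ Ω̃} [⟨∇ℓ(ω), ω' − ω⟩ + ρ D_{A*}(ω', ω)]`. -/
def bfbe (d : ℕ) (U D : ℝ) (ℓ : MFParam d → ℝ) (ρ : ℝ) (w : MFParam d) : ℝ :=
  -2 * ρ * sInf ((fun w' => ⟪gradient ℓ w, w' - w⟫ + ρ * bregAstar w' w) '' OmegaT d U D)

/-- The inverse Hessian `(∇²A*(ω))⁻¹` of the mirror map, applied to a vector `g`. -/
def invHessAstar {d : ℕ} (ω : MFParam d) (g : MFParam d) : MFParam d :=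
  WithLp.toLp 2 (fun k => match k with
  | Sum.inl i => varP ω i * g (Sum.inl i) + 2 * xiP ω i * varP ω i * g (Sum.inr i)
  | Sum.inr i => 2 * xiP ω i * varP ω i * g (Sum.inl i) +
      (4 * (xiP ω i) ^ 2 * varP ω i + 2 * (varP ω i) ^ 2) * g (Sum.inr i))

/-- Outward normal directions at a boundary point `ω` of `Ω̃`: unit vectors in the cone
generated by the gradients of the active constraints among `ξ_i − U ≤ 0`, `−ξ_i − U ≤ 0`,
`(Ξ_ii − ξ_i²) − D ≤ 0`, `D⁻¹ − (Ξ_ii − ξ_i²) ≤ 0`. -/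
def outwardNormals (d : ℕ) (U D : ℝ) (ω : MFParam d) : Set (MFParam d) :=
  {n | ‖n‖ = 1 ∧ ∃ c₁ c₂ c₃ c₄ : Fin d → ℝ,
    (∀ i, 0 ≤ c₁ i ∧ 0 ≤ c₂ i ∧ 0 ≤ c₃ i ∧ 0 ≤ c₄ i) ∧
    (∀ i, c₁ i ≠ 0 → xiP ω i = U) ∧
    (∀ i, c₂ i ≠ 0 → xiP ω i = -U) ∧
    (∀ i, c₃ i ≠ 0 → varP ω i = D) ∧
    (∀ i, c₄ i ≠ 0 → varP ω i = D⁻¹) ∧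
    n = ∑ i : Fin d,
      (c₁ i • (EuclideanSpace.single (Sum.inl i) (1 : ℝ) : MFParam d) +
       c₂ i • (-(EuclideanSpace.single (Sum.inl i) (1 : ℝ) : MFParam d)) +
       c₃ i • ((EuclideanSpace.single (Sum.inr i) (1 : ℝ) : MFParam d) -
          (2 * xiP ω i) • (EuclideanSpace.single (Sum.inl i) (1 : ℝ) : MFParam d)) +
       c₄ i • ((2 * xiP ω i) • (EuclideanSpace.single (Sum.inl i) (1 : ℝ) : MFParam d) -
          (EuclideanSpace.single (Sum.inr i) (1 : ℝ) : MFParam d)))}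

/-!
Let `g = ∇ℓ(ω)` and let `v = (∇²A*(ω))⁻¹ g` be the natural gradient. The boundary hypothesis
says that `v` strictly decreases every active constraint, so `ω - t v ∈ Ω̃` for all small
`t > 0`. Along this ray the linear part of the envelope objective is `-t ⟪g, v⟫`, and the
Bregman divergence is bounded through `log z ≥ 1 - 1/z` by `(t²/2)` times a quantity tending
to at most `2 ∇²A*(ω)[v, v] = 2 ⟪g, v⟫`, hence by `(9/4) ⟪g, v⟫ t²/2` for small `t`. The choice
`t = 4/(9ρ)` then gives `ℰ_ρ(ω) ≥ (4/9) ⟪g, v⟫` for all large `ρ`, and on `Ω̃` the bounds on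
`ξ` and on the variances give `⟪g, (∇²A*(ω))⁻¹ g⟫ ≥ ‖g‖² / (4 U² D²)`.
-/

open Filter Topology

lemma notMem_interior_of_forall_sub_smul_notMem {E : Type*} [AddCommGroup E] [Module ℝ E]
    [TopologicalSpace E] [IsTopologicalAddGroup E] [ContinuousSMul ℝ E] {s : Set E} {x v : E}
    (h : ∀ t : ℝ, 0 < t → x - t • v ∉ s) : x ∉ interior s := by
  intro hx
  have hT : Tendsto (fun t : ℝ => x - t • v) (𝓝[>] 0) (𝓝 x) := by
    have : Continuous (fun t : ℝ => x - t • v) := by fun_prop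
    simpa using (this.tendsto 0).mono_left nhdsWithin_le_nhds
  obtain ⟨t, hts, ht⟩ :=
    ((hT.eventually (mem_interior_iff_mem_nhds.1 hx)).and self_mem_nhdsWithin).exists
  exact h t ht hts

lemma eventually_nonneg_quadratic {a b c : ℝ} (ha : 0 ≤ a) (hb : a = 0 → 0 < b) :
    ∀ᶠ t in 𝓝[>] 0, 0 ≤ a + b * t + c * t ^ 2 := by
  rcases ha.eq_or_lt with rfl | ha
  · have : ∀ᶠ t in 𝓝 (0 : ℝ), 0 < b + c * t :=
      continuousAt_const.eventually_lt (by fun_prop) (by simpa using hb rfl)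
    filter_upwards [nhdsWithin_le_nhds this, self_mem_nhdsWithin] with t hbt ht
    nlinarith [mul_pos ht hbt]
  · have : ∀ᶠ t in 𝓝 (0 : ℝ), 0 < a + b * t + c * t ^ 2 :=
      continuousAt_const.eventually_lt (by fun_prop) (by simpa using ha)
    exact nhdsWithin_le_nhds (this.mono fun _ h => h.le)

lemma sub_one_sub_log_le (z : ℝ) (hz : 0 < z) : z - 1 - Real.log z ≤ (z - 1) ^ 2 / z := by
  have hlog := Real.one_sub_inv_le_log_of_pos hz
  have hsq : (z - 1) ^ 2 / z = z - 2 + z⁻¹ := by field_simp; ring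
  linarith

lemma sq_add_sq_le_quadForm {U D s x : ℝ} (a b : ℝ) (hU : 1 ≤ U) (hD : 1 ≤ D) (hs : D⁻¹ ≤ s)
    (hx : |x| ≤ U) :
    a ^ 2 + b ^ 2 ≤ 4 * U ^ 2 * D ^ 2 * (s * (a + 2 * x * b) ^ 2 + 2 * s ^ 2 * b ^ 2) := by
  set c := a + 2 * x * b
  have hDs : 1 ≤ D * s := by rwa [← inv_mul_le_iff₀ (by positivity), mul_one]
  have ha : a ^ 2 ≤ 7 / 3 * c ^ 2 + 7 * x ^ 2 * b ^ 2 := by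
    nlinarith [sq_nonneg (2 * c + 3 * x * b)]
  have hx2 : x ^ 2 ≤ U ^ 2 := sq_le_sq' (abs_le.1 hx).1 (abs_le.1 hx).2
  have hU2 : 1 ≤ U ^ 2 := one_le_pow₀ hU
  have hc : 7 / 3 * c ^ 2 ≤ 4 * U ^ 2 * D ^ 2 * (s * c ^ 2) := by
    have h1 : 1 ≤ U ^ 2 * D * (D * s) :=
      one_le_mul_of_one_le_of_one_le (one_le_mul_of_one_le_of_one_le hU2 hD) hDs
    have h2 : 4 * U ^ 2 * D ^ 2 * (s * c ^ 2) = 4 * (U ^ 2 * D * (D * s)) * c ^ 2 := by ring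
    nlinarith [sq_nonneg c]
  have hb : 7 * x ^ 2 * b ^ 2 + b ^ 2 ≤ 4 * U ^ 2 * D ^ 2 * (2 * s ^ 2 * b ^ 2) := by
    have h1 : 8 * U ^ 2 * b ^ 2 ≤ 8 * U ^ 2 * b ^ 2 * (D * s) ^ 2 :=
      le_mul_of_one_le_right (by positivity) (one_le_pow₀ hDs)
    nlinarith [mul_le_mul_of_nonneg_right hx2 (sq_nonneg b),
      mul_le_mul_of_nonneg_right hU2 (sq_nonneg b)]
  linarith

section MirrorMap

variable {d : ℕ}

/-- The derivative of `w ↦ varP w i` at `ω` in the direction `v`. -/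
def varDeriv (ω v : MFParam d) (i : Fin d) : ℝ := v (Sum.inr i) - 2 * xiP ω i * v (Sum.inl i)

lemma xiP_sub_smul (ω v : MFParam d) (t : ℝ) (i : Fin d) :
    xiP (ω - t • v) i = xiP ω i - t * v (Sum.inl i) := by
  simp [xiP]

lemma varP_sub_smul (ω v : MFParam d) (t : ℝ) (i : Fin d) :
    varP (ω - t • v) i = varP ω i - t * varDeriv ω v i - t ^ 2 * v (Sum.inl i) ^ 2 := by
  simp only [varP, XiP, xiP, varDeriv, PiLp.sub_apply, PiLp.smul_apply, smul_eq_mul]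
  ring

lemma varDeriv_sub (u ω : MFParam d) (i : Fin d) :
    varDeriv ω (u - ω) i = varP u i - varP ω i + (xiP u i - xiP ω i) ^ 2 := by
  simp only [varDeriv, varP, XiP, xiP, PiLp.sub_apply]
  ring

lemma hasFDerivAt_varP (ω : MFParam d) (i : Fin d) :
    HasFDerivAt (fun w : MFParam d => varP w i)
      ((EuclideanSpace.proj (Sum.inr i) : MFParam d →L[ℝ] ℝ) -
        (2 * xiP ω i) • EuclideanSpace.proj (Sum.inl i)) ω := by
  have hξ := (EuclideanSpace.proj (Sum.inl i) : MFParam d →L[ℝ] ℝ).hasFDerivAt (x := ω)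
  have hΞ := (EuclideanSpace.proj (Sum.inr i) : MFParam d →L[ℝ] ℝ).hasFDerivAt (x := ω)
  refine (hΞ.sub (hξ.pow 2)).congr_fderiv ?_
  ext w
  simp [xiP]

lemma inner_gradient_Astar {ω : MFParam d} (hω : ∀ i, varP ω i ≠ 0) (h : MFParam d) :
    ⟪gradient Astar ω, h⟫ = -(1 / 2) * ∑ i, varDeriv ω h i / varP ω i := by
  have hA : HasFDerivAt Astar ((-(1 / 2) : ℝ) • ∑ i, (varP ω i)⁻¹ •
      ((EuclideanSpace.proj (Sum.inr i) : MFParam d →L[ℝ] ℝ) -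
        (2 * xiP ω i) • EuclideanSpace.proj (Sum.inl i))) ω :=
    ((HasFDerivAt.fun_sum fun i _ => (hasFDerivAt_varP ω i).log (hω i)).const_smul _)
      |>.congr_of_eventuallyEq (Eventually.of_forall fun w => by simp [Astar])
  rw [gradient, InnerProductSpace.toDual_symm_apply, hA.fderiv]
  simp [varDeriv, xiP, div_eq_inv_mul]

lemma bregAstar_eq {u ω : MFParam d} (hu : ∀ i, varP u i ≠ 0) (hω : ∀ i, varP ω i ≠ 0) :
    bregAstar u ω = ∑ i, ((varP u i / varP ω i - 1 - Real.log (varP u i / varP ω i)) / 2 +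
      (xiP u i - xiP ω i) ^ 2 / (2 * varP ω i)) := by
  rw [bregAstar, inner_gradient_Astar hω, Astar, Astar]
  simp only [Finset.mul_sum, ← Finset.sum_sub_distrib]
  refine Finset.sum_congr rfl fun i _ => ?_
  rw [varDeriv_sub, Real.log_div (hu i) (hω i)]
  have := hω i
  field_simp
  ring

lemma bregAstar_nonneg {u ω : MFParam d} (hu : ∀ i, 0 < varP u i) (hω : ∀ i, 0 < varP ω i) :
    0 ≤ bregAstar u ω := by
  rw [bregAstar_eq (fun i => (hu i).ne') (fun i => (hω i).ne')]
  refine Finset.sum_nonneg fun i _ => ?_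
  have := Real.log_le_sub_one_of_pos (div_pos (hu i) (hω i))
  have := hω i
  positivity

/-- The Hessian quadratic form `∇²A*(ω)[v, v]` of the mirror map. -/
def hessQuad (ω v : MFParam d) : ℝ :=
  ∑ i, (v (Sum.inl i) ^ 2 / varP ω i + varDeriv ω v i ^ 2 / (2 * varP ω i ^ 2))

lemma bregAstar_sub_smul_le {ω v : MFParam d} {t : ℝ} (hω : ∀ i, 0 < varP ω i)
    (ht : ∀ i, 0 < varP (ω - t • v) i) :
    bregAstar (ω - t • v) ω ≤ t ^ 2 / 2 * ∑ i,
      ((varDeriv ω v i + t * v (Sum.inl i) ^ 2) ^ 2 / (varP ω i * varP (ω - t • v) i) +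
        v (Sum.inl i) ^ 2 / varP ω i) := by
  rw [bregAstar_eq (fun i => (ht i).ne') (fun i => (hω i).ne'), Finset.mul_sum]
  refine Finset.sum_le_sum fun i _ => ?_
  have hs := hω i
  have hp := ht i
  have hlog := sub_one_sub_log_le _ (div_pos hp hs)
  have hp_eq := varP_sub_smul ω v t i
  set p := varP (ω - t • v) i
  calc _ ≤ (p / varP ω i - 1) ^ 2 / (p / varP ω i) / 2 +
        (xiP (ω - t • v) i - xiP ω i) ^ 2 / (2 * varP ω i) := by linarith
    _ = _ := by
      rw [xiP_sub_smul]
      field_simp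
      rw [hp_eq]
      ring

lemma eventually_bregAstar_sub_smul_le {ω v : MFParam d} (hω : ∀ i, 0 < varP ω i) {K : ℝ}
    (hK : 2 * hessQuad ω v < K) : ∀ᶠ t in 𝓝 0, bregAstar (ω - t • v) ω ≤ K * t ^ 2 / 2 := by
  have hvar : ∀ i, ContinuousAt (fun t : ℝ => varP (ω - t • v) i) 0 := fun i => by
    simp_rw [varP_sub_smul]; fun_prop
  have hpos : ∀ᶠ t in 𝓝 (0 : ℝ), ∀ i, 0 < varP (ω - t • v) i :=
    eventually_all.2 fun i => continuousAt_const.eventually_lt (hvar i) (by simpa using hω i)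
  set B : ℝ → ℝ := fun t => ∑ i,
    ((varDeriv ω v i + t * v (Sum.inl i) ^ 2) ^ 2 / (varP ω i * varP (ω - t • v) i) +
      v (Sum.inl i) ^ 2 / varP ω i)
  have hB : ContinuousAt B 0 := by
    refine tendsto_finsetSum _ fun i _ => ?_
    have := hω i
    exact ((continuousAt_const.add (continuousAt_id.mul continuousAt_const)).pow 2).div
      (continuousAt_const.mul (hvar i)) (by simp; positivity) |>.add continuousAt_const
  have hB0 : B 0 < K := by
    refine lt_of_le_of_lt ?_ hK
    rw [hessQuad, Finset.mul_sum]
    refine Finset.sum_le_sum fun i _ => ?_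
    have := hω i
    simp only [zero_mul, add_zero, zero_smul, sub_zero]
    field_simp
    nlinarith [mul_nonneg this.le (sq_nonneg (v (Sum.inl i)))]
  filter_upwards [hpos, hB.eventually_lt continuousAt_const hB0] with t ht htK
  calc bregAstar (ω - t • v) ω ≤ t ^ 2 / 2 * B t := bregAstar_sub_smul_le hω ht
    _ ≤ t ^ 2 / 2 * K := by gcongr
    _ = K * t ^ 2 / 2 := by ring

lemma inner_invHessAstar (ω g : MFParam d) :
    ⟪g, invHessAstar ω g⟫ = ∑ i, (varP ω i * (g (Sum.inl i) + 2 * xiP ω i * g (Sum.inr i)) ^ 2 +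
      2 * varP ω i ^ 2 * g (Sum.inr i) ^ 2) := by
  rw [PiLp.inner_apply, Fintype.sum_sum_type, ← Finset.sum_add_distrib]
  refine Finset.sum_congr rfl fun i _ => ?_
  simp only [invHessAstar, RCLike.inner_apply, conj_trivial]
  ring

lemma hessQuad_invHessAstar {ω : MFParam d} (hω : ∀ i, varP ω i ≠ 0) (g : MFParam d) :
    hessQuad ω (invHessAstar ω g) = ⟪g, invHessAstar ω g⟫ := by
  rw [inner_invHessAstar, hessQuad]
  refine Finset.sum_congr rfl fun i _ => ?_
  have := hω i
  simp only [varDeriv, invHessAstar]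
  field_simp
  ring

end MirrorMap

section Domain

variable {d : ℕ} {U D : ℝ}

lemma varP_pos_of_mem_OmegaT (hD : 0 < D) {ω : MFParam d} (hω : ω ∈ OmegaT d U D) (i : Fin d) :
    0 < varP ω i :=
  (inv_pos.2 hD).trans_le (hω i).2.1

lemma isBounded_OmegaT (hD : 0 < D) : Bornology.IsBounded (OmegaT d U D) := by
  refine isBounded_iff_forall_norm_le.2 ⟨√(d * (U ^ 2 + (D + U ^ 2) ^ 2)), fun ω hω => ?_⟩
  refine Real.le_sqrt_of_sq_le ?_
  rw [EuclideanSpace.real_norm_sq_eq, Fintype.sum_sum_type, ← Finset.sum_add_distrib]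
  refine (Finset.sum_le_card_nsmul _ _ (U ^ 2 + (D + U ^ 2) ^ 2) fun i _ => ?_).trans_eq
    (by simp [mul_add])
  obtain ⟨hξ, hlo, hhi⟩ := hω i
  have hξ2 : xiP ω i ^ 2 ≤ U ^ 2 := sq_le_sq' (abs_le.1 hξ).1 (abs_le.1 hξ).2
  have hΞ : XiP ω i = varP ω i + xiP ω i ^ 2 := by rw [varP]; ring
  have hΞ0 : 0 ≤ XiP ω i := by rw [hΞ]; have := (inv_pos.2 hD).trans_le hlo; positivity
  have hΞ2 : XiP ω i ^ 2 ≤ (D + U ^ 2) ^ 2 := pow_le_pow_left₀ hΞ0 (by linarith) 2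
  exact add_le_add hξ2 hΞ2

lemma norm_sq_le_inner_invHessAstar (hU : 1 ≤ U) (hD : 1 ≤ D) {ω : MFParam d}
    (hω : ω ∈ OmegaT d U D) (g : MFParam d) :
    ‖g‖ ^ 2 ≤ 4 * U ^ 2 * D ^ 2 * ⟪g, invHessAstar ω g⟫ := by
  rw [EuclideanSpace.real_norm_sq_eq, Fintype.sum_sum_type, ← Finset.sum_add_distrib,
    inner_invHessAstar, Finset.mul_sum]
  exact Finset.sum_le_sum fun i _ => sq_add_sq_le_quadForm _ _ hU hD (hω i).2.1 (hω i).1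

lemma mem_frontier_OmegaT {ω : MFParam d} (hω : ω ∈ OmegaT d U D) {i : Fin d}
    (hact : xiP ω i = U ∨ xiP ω i = -U ∨ varP ω i = D ∨ varP ω i = D⁻¹) :
    ω ∈ frontier (OmegaT d U D) := by
  refine ⟨subset_closure hω, ?_⟩
  rcases hact with h | h | h | h
  · refine notMem_interior_of_forall_sub_smul_notMem (v := -EuclideanSpace.single (Sum.inl i) 1)
      fun t ht hmem => ?_
    have := (abs_le.1 (hmem i).1).2
    rw [xiP_sub_smul, h] at this
    simp at this
    linarith
  · refine notMem_interior_of_forall_sub_smul_notMem (v := EuclideanSpace.single (Sum.inl i) 1)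
      fun t ht hmem => ?_
    have := (abs_le.1 (hmem i).1).1
    rw [xiP_sub_smul, h] at this
    simp at this
    linarith
  · refine notMem_interior_of_forall_sub_smul_notMem (v := -EuclideanSpace.single (Sum.inr i) 1)
      fun t ht hmem => ?_
    have := (hmem i).2.2
    rw [varP_sub_smul, h] at this
    simp [varDeriv] at this
    linarith
  · refine notMem_interior_of_forall_sub_smul_notMem (v := EuclideanSpace.single (Sum.inr i) 1)
      fun t ht hmem => ?_
    have := (hmem i).2.1
    rw [varP_sub_smul, h] at this
    simp [varDeriv] at this
    linarith

/-- The `i`-th summand in the definition of `outwardNormals`. -/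
def activeNormal (ω : MFParam d) (i : Fin d) (a₁ a₂ a₃ a₄ : ℝ) : MFParam d :=
  a₁ • (EuclideanSpace.single (Sum.inl i) (1 : ℝ) : MFParam d) +
    a₂ • (-(EuclideanSpace.single (Sum.inl i) (1 : ℝ) : MFParam d)) +
    a₃ • ((EuclideanSpace.single (Sum.inr i) (1 : ℝ) : MFParam d) -
      (2 * xiP ω i) • (EuclideanSpace.single (Sum.inl i) (1 : ℝ) : MFParam d)) +
    a₄ • ((2 * xiP ω i) • (EuclideanSpace.single (Sum.inl i) (1 : ℝ) : MFParam d) -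
      (EuclideanSpace.single (Sum.inr i) (1 : ℝ) : MFParam d))

lemma inner_activeNormal (ω v : MFParam d) (i : Fin d) (a₁ a₂ a₃ a₄ : ℝ) :
    ⟪v, activeNormal ω i a₁ a₂ a₃ a₄⟫ = (a₁ - a₂) * v (Sum.inl i) + (a₃ - a₄) * varDeriv ω v i := by
  simp only [activeNormal, varDeriv, inner_add_right, inner_sub_right, inner_neg_right,
    real_inner_smul_right, EuclideanSpace.inner_single_right, conj_trivial, one_mul]
  ring

lemma activeNormal_ne_zero (ω : MFParam d) (i : Fin d) {a₁ a₂ a₃ a₄ : ℝ}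
    (ha : a₁ ≠ a₂ ∨ a₃ ≠ a₄) : activeNormal ω i a₁ a₂ a₃ a₄ ≠ 0 := by
  intro h
  have h₁ := inner_activeNormal ω (EuclideanSpace.single (Sum.inl i) 1) i a₁ a₂ a₃ a₄
  have h₂ := inner_activeNormal ω (EuclideanSpace.single (Sum.inr i) 1) i a₁ a₂ a₃ a₄
  simp [h, varDeriv] at h₁ h₂
  obtain rfl : a₃ = a₄ := by linarith
  simp only [ne_eq, not_true_eq_false, or_false] at ha
  exact ha (by linarith)

lemma inv_norm_smul_activeNormal_mem_outwardNormals {ω : MFParam d} {i : Fin d}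
    {a₁ a₂ a₃ a₄ : ℝ} (ha : 0 ≤ a₁ ∧ 0 ≤ a₂ ∧ 0 ≤ a₃ ∧ 0 ≤ a₄)
    (hact : (a₁ ≠ 0 → xiP ω i = U) ∧ (a₂ ≠ 0 → xiP ω i = -U) ∧ (a₃ ≠ 0 → varP ω i = D) ∧
      (a₄ ≠ 0 → varP ω i = D⁻¹))
    (hn : activeNormal ω i a₁ a₂ a₃ a₄ ≠ 0) :
    ‖activeNormal ω i a₁ a₂ a₃ a₄‖⁻¹ • activeNormal ω i a₁ a₂ a₃ a₄ ∈ outwardNormals d U D ω := by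
  set r := ‖activeNormal ω i a₁ a₂ a₃ a₄‖⁻¹
  have hr : 0 ≤ r := inv_nonneg.2 (norm_nonneg _)
  refine ⟨norm_smul_inv_norm hn, Pi.single i (r * a₁), Pi.single i (r * a₂), Pi.single i (r * a₃),
    Pi.single i (r * a₄), fun j => ?_, ?_, ?_, ?_, ?_, ?sum⟩
  case sum =>
    rw [Finset.sum_eq_single i (fun j _ hj => by simp [hj]) (by simp)]
    simp [activeNormal, smul_add, smul_smul]
  · simp only [Pi.single_apply]
    split_ifs <;> simp [mul_nonneg hr, ha.1, ha.2.1, ha.2.2.1, ha.2.2.2]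
  all_goals intro j hj; obtain rfl : j = i := by by_contra h; simp [h] at hj
  all_goals simp only [Pi.single_eq_same, ne_eq, mul_eq_zero, not_or] at hj
  exacts [hact.1 hj.2, hact.2.1 hj.2, hact.2.2.1 hj.2, hact.2.2.2 hj.2]

lemma pos_of_forall_inner_outwardNormals_neg {ω v : MFParam d} {i : Fin d}
    (hv : ∀ n ∈ outwardNormals d U D ω, ⟪-v, n⟫ < 0) {a₁ a₂ a₃ a₄ : ℝ}
    (ha : 0 ≤ a₁ ∧ 0 ≤ a₂ ∧ 0 ≤ a₃ ∧ 0 ≤ a₄)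
    (hact : (a₁ ≠ 0 → xiP ω i = U) ∧ (a₂ ≠ 0 → xiP ω i = -U) ∧ (a₃ ≠ 0 → varP ω i = D) ∧
      (a₄ ≠ 0 → varP ω i = D⁻¹))
    (hne : a₁ ≠ a₂ ∨ a₃ ≠ a₄) :
    0 < (a₁ - a₂) * v (Sum.inl i) + (a₃ - a₄) * varDeriv ω v i := by
  have hn := activeNormal_ne_zero ω i hne
  have h := hv _ (inv_norm_smul_activeNormal_mem_outwardNormals ha hact hn)
  rw [inner_neg_left, real_inner_smul_right, inner_activeNormal, neg_lt_zero] at h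
  exact pos_of_mul_pos_right h (inv_nonneg.2 (norm_nonneg _))

lemma eventually_sub_smul_mem_OmegaT {ω v : MFParam d} (hω : ω ∈ OmegaT d U D)
    (hv : ω ∈ frontier (OmegaT d U D) → ∀ n ∈ outwardNormals d U D ω, ⟪-v, n⟫ < 0) :
    ∀ᶠ t in 𝓝[>] (0 : ℝ), ω - t • v ∈ OmegaT d U D := by
  refine eventually_all.2 fun i => ?_
  obtain ⟨hξ, hlo, hhi⟩ := hω i
  have hξ' := abs_le.1 hξ
  have h₁ := eventually_nonneg_quadratic (c := 0) (sub_nonneg.2 hξ'.2) fun h => by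
    have hact : xiP ω i = U := (sub_eq_zero.1 h).symm
    simpa using pos_of_forall_inner_outwardNormals_neg (a₁ := 1) (a₂ := 0) (a₃ := 0) (a₄ := 0)
      (hv (mem_frontier_OmegaT hω (Or.inl hact))) (by norm_num) (by simpa using hact) (by norm_num)
  have h₂ := eventually_nonneg_quadratic (b := -v (Sum.inl i)) (c := 0)
      (neg_le_iff_add_nonneg.1 hξ'.1) fun h => by
    have hact : xiP ω i = -U := eq_neg_of_add_eq_zero_left h
    simpa using pos_of_forall_inner_outwardNormals_neg (a₁ := 0) (a₂ := 1) (a₃ := 0) (a₄ := 0)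
      (hv (mem_frontier_OmegaT hω (Or.inr (Or.inl hact)))) (by norm_num) (by simpa using hact)
      (by norm_num)
  have h₃ := eventually_nonneg_quadratic (c := v (Sum.inl i) ^ 2) (sub_nonneg.2 hhi) fun h => by
    have hact : varP ω i = D := (sub_eq_zero.1 h).symm
    simpa using pos_of_forall_inner_outwardNormals_neg (a₁ := 0) (a₂ := 0) (a₃ := 1) (a₄ := 0)
      (hv (mem_frontier_OmegaT hω (Or.inr (Or.inr (Or.inl hact))))) (by norm_num)
      (by simpa using hact) (by norm_num)
  have h₄ := eventually_nonneg_quadratic (b := -varDeriv ω v i) (c := -v (Sum.inl i) ^ 2)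
      (sub_nonneg.2 hlo) fun h => by
    have hact : varP ω i = D⁻¹ := sub_eq_zero.1 h
    simpa using pos_of_forall_inner_outwardNormals_neg (a₁ := 0) (a₂ := 0) (a₃ := 0) (a₄ := 1)
      (hv (mem_frontier_OmegaT hω (Or.inr (Or.inr (Or.inr hact))))) (by norm_num)
      (by simpa using hact) (by norm_num)
  filter_upwards [h₁, h₂, h₃, h₄] with t h₁ h₂ h₃ h₄
  rw [xiP_sub_smul, varP_sub_smul, abs_le]
  refine ⟨⟨?_, ?_⟩, ?_, ?_⟩ <;> linarith

end Domain

section Envelope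

variable {d : ℕ} {U D : ℝ}

lemma bddBelow_bfbe_image (hD : 0 < D) {ω : MFParam d} (hω : ω ∈ OmegaT d U D) (g : MFParam d)
    {ρ : ℝ} (hρ : 0 ≤ ρ) :
    BddBelow ((fun w => ⟪g, w - ω⟫ + ρ * bregAstar w ω) '' OmegaT d U D) := by
  obtain ⟨C, hC⟩ := isBounded_iff_forall_norm_le.1 (isBounded_OmegaT (d := d) (U := U) hD)
  refine ⟨-(‖g‖ * (C + ‖ω‖)), ?_⟩
  rintro _ ⟨w, hw, rfl⟩
  have hinner : -(‖g‖ * ‖w - ω‖) ≤ ⟪g, w - ω⟫ := neg_le_of_abs_le (abs_real_inner_le_norm g _)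
  have hdist : ‖g‖ * ‖w - ω‖ ≤ ‖g‖ * (C + ‖ω‖) :=
    mul_le_mul_of_nonneg_left ((norm_sub_le _ _).trans (by linarith [hC w hw])) (norm_nonneg g)
  have hbreg : 0 ≤ ρ * bregAstar w ω := mul_nonneg hρ
    (bregAstar_nonneg (varP_pos_of_mem_OmegaT hD hw) (varP_pos_of_mem_OmegaT hD hω))
  dsimp only
  linarith

lemma le_bfbe (hD : 0 < D) (ℓ : MFParam d → ℝ) {ω w : MFParam d} (hω : ω ∈ OmegaT d U D)
    (hw : w ∈ OmegaT d U D) {ρ : ℝ} (hρ : 0 ≤ ρ) :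
    -2 * ρ * (⟪gradient ℓ ω, w - ω⟫ + ρ * bregAstar w ω) ≤ bfbe d U D ℓ ρ ω :=
  mul_le_mul_of_nonpos_left (csInf_le (bddBelow_bfbe_image hD hω _ hρ) (Set.mem_image_of_mem _ hw))
    (by linarith)

lemma bfbe_nonneg (hD : 0 < D) (ℓ : MFParam d → ℝ) {ω : MFParam d} (hω : ω ∈ OmegaT d U D)
    {ρ : ℝ} (hρ : 0 ≤ ρ) : 0 ≤ bfbe d U D ℓ ρ ω := by
  simpa [bregAstar] using le_bfbe hD ℓ hω hω hρ

lemma exists_forall_sq_inner_div_le_bfbe (hD : 0 < D) (ℓ : MFParam d → ℝ) {ω v : MFParam d}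
    (hω : ω ∈ OmegaT d U D) {K : ℝ} (hK : 0 < K) (hQ : 0 < ⟪gradient ℓ ω, v⟫)
    (hfeas : ∀ᶠ t in 𝓝[>] (0 : ℝ), ω - t • v ∈ OmegaT d U D)
    (hbreg : ∀ᶠ t in 𝓝[>] (0 : ℝ), bregAstar (ω - t • v) ω ≤ K * t ^ 2 / 2) :
    ∃ ρ₀ : ℝ, 0 < ρ₀ ∧ ∀ ρ : ℝ, ρ₀ ≤ ρ → ⟪gradient ℓ ω, v⟫ ^ 2 / K ≤ bfbe d U D ℓ ρ ω := by
  set Q := ⟪gradient ℓ ω, v⟫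
  obtain ⟨t₀, ht₀, hsub⟩ := mem_nhdsGT_iff_exists_Ioc_subset.1 (hfeas.and hbreg)
  have hρ₀ : 0 < Q / (K * t₀) := div_pos hQ (mul_pos hK ht₀)
  refine ⟨Q / (K * t₀), hρ₀, fun ρ hρ => ?_⟩
  have hρ0 : 0 < ρ := hρ₀.trans_le hρ
  -- the minimiser of `-t Q + ρ K t² / 2`
  set t := Q / (K * ρ)
  have ht : t ∈ Set.Ioc 0 t₀ := by
    refine ⟨div_pos hQ (mul_pos hK hρ0), ?_⟩
    rw [div_le_iff₀ (mul_pos hK ht₀)] at hρ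
    rw [div_le_iff₀ (mul_pos hK hρ0)]
    linarith
  obtain ⟨hmem, hb⟩ := hsub ht
  have hlin : ⟪gradient ℓ ω, (ω - t • v) - ω⟫ = -(t * Q) := by
    simp [inner_smul_right, Q]
  calc Q ^ 2 / K = -2 * ρ * (-(t * Q) + ρ * (K * t ^ 2 / 2)) := by
        simp only [t]; field_simp; ring
    _ ≤ -2 * ρ * (⟪gradient ℓ ω, (ω - t • v) - ω⟫ + ρ * bregAstar (ω - t • v) ω) := by
        rw [hlin]
        exact mul_le_mul_of_nonpos_left (by gcongr) (by linarith)
    _ ≤ bfbe d U D ℓ ρ ω := le_bfbe hD ℓ hω hmem hρ0.le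

end Envelope

theorem pl_implies_bregman_prox_pl_general
    {d : ℕ} (U D : ℝ) (hU : 1 ≤ U) (hD : 1 < D)
    (ℓ : MFParam d → ℝ)
    (hboundary : ∀ ω ∈ frontier (OmegaT d U D), ∀ n ∈ outwardNormals d U D ω,
      ⟪-(invHessAstar ω (gradient ℓ ω)), n⟫ < 0) :
    ∀ ω ∈ OmegaT d U D, ∃ ρ₀ : ℝ, 0 < ρ₀ ∧ ∀ ρ : ℝ, ρ₀ ≤ ρ →
      bfbe d U D ℓ ρ ω ≥ ‖gradient ℓ ω‖ ^ 2 / (2 * ((9 / 2) * U ^ 2 * D ^ 2)) := by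
  intro ω hω
  have hD₀ : 0 < D := by linarith
  set g := gradient ℓ ω
  by_cases hg : g = 0
  · exact ⟨1, one_pos, fun ρ hρ => by simpa [hg] using bfbe_nonneg hD₀ ℓ hω (by linarith)⟩
  set v := invHessAstar ω g
  have hvar := varP_pos_of_mem_OmegaT hD₀ hω
  have hnorm := norm_sq_le_inner_invHessAstar hU hD.le hω g
  have hQ : 0 < ⟪g, v⟫ :=
    pos_of_mul_pos_right ((pow_pos (norm_pos_iff.2 hg) 2).trans_le hnorm) (by positivity)
  have hbreg := eventually_bregAstar_sub_smul_le (v := v) hvar (K := 9 / 4 * ⟪g, v⟫)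
    (by rw [hessQuad_invHessAstar fun i => (hvar i).ne']; linarith)
  obtain ⟨ρ₀, hρ₀, hle⟩ := exists_forall_sq_inner_div_le_bfbe hD₀ ℓ hω (by positivity) hQ
    (eventually_sub_smul_mem_OmegaT hω (hboundary ω)) (nhdsWithin_le_nhds hbreg)
  refine ⟨ρ₀, hρ₀, fun ρ hρ => le_trans ?_ (hle ρ hρ)⟩
  rw [show ⟪g, v⟫ ^ 2 / (9 / 4 * ⟪g, v⟫) = 4 / 9 * ⟪g, v⟫ by field_simp,
    div_le_iff₀ (by positivity)]
  linarith

/-- Proposition D.1, PL implies Bregman Prox-PL under the boundary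
assumption: if `ℓ` is `C¹` on a neighborhood of `Ω̃` and the natural gradient points
inward at every boundary point of `Ω̃`, then for every `ω ∈ Ω̃` there is `ρ₀ > 0` such
that for all `ρ ≥ ρ₀`, `ℰ_ρ(ω) ≥ ‖∇ℓ(ω)‖² / (2 C_L)` with `C_L = (9/2)U²D²`. -/
theorem pl_implies_bregman_prox_pl
    {d : ℕ} (hd : 1 ≤ d) (U D : ℝ) (hU : 1 ≤ U) (hD : 1 < D)
    (ℓ : MFParam d → ℝ)
    (hC1 : ∃ Vo : Set (MFParam d), IsOpen Vo ∧ OmegaT d U D ⊆ Vo ∧ ContDiffOn ℝ 1 ℓ Vo)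
    (hboundary : ∀ ω ∈ frontier (OmegaT d U D), ∀ n ∈ outwardNormals d U D ω,
      ⟪-(invHessAstar ω (gradient ℓ ω)), n⟫ < 0) :
    ∀ ω ∈ OmegaT d U D, ∃ ρ₀ : ℝ, 0 < ρ₀ ∧ ∀ ρ : ℝ, ρ₀ ≤ ρ →
      bfbe d U D ℓ ρ ω ≥ ‖gradient ℓ ω‖ ^ 2 / (2 * ((9 / 2) * U ^ 2 * D ^ 2)) :=
  pl_implies_bregman_prox_pl_general U D hU hD ℓ hboundary
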